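/- The relaxed hanging chain problem has at most one optimal solution. -/

import Mathlib

/-!
If `y ≠ z` are both optimal, their midpoint `w` is feasible with the same cost. Since
`t ↦ √(L² - t²)` is strictly concave, `w` spans strictly more than `d`. But a feasible point
with slack is never optimal: as no link is longer than `d`, some link `i` can still be lowered
and some later link `j > i` raised, and moving link `i` down and link `j` up by a small `ε` keeps
feasibility while lowering the cost by `ε (c i - c j) > 0`, because the weights `c` decrease.
-/

open Finset Filter Topology

namespace HangingChain

variable {ι : Type*} [Fintype ι]

/-- Horizontal extent of a chain with link lengths `ℓ` and vertical link displacements `w`. -/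
noncomputable def span (ℓ w : ι → ℝ) : ℝ := ∑ i, √(ℓ i ^ 2 - w i ^ 2)

def Feasible (ℓ : ι → ℝ) (d : ℝ) (w : ι → ℝ) : Prop :=
  ∑ i, w i = 0 ∧ (∀ i, |w i| ≤ ℓ i) ∧ d ≤ span ℓ w

theorem sqrt_sq_sub_sq_of_abs_eq {L a : ℝ} (h : |a| = L) : √(L ^ 2 - a ^ 2) = 0 := by
  rw [← h, sq_abs, sub_self, Real.sqrt_zero]

theorem sqrt_sq_sub_sq_le {L a : ℝ} (hL : 0 ≤ L) : √(L ^ 2 - a ^ 2) ≤ L :=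
  (Real.sqrt_le_left hL).2 (by nlinarith)

theorem sqrt_sq_sub_sq_avg_lt {L a b : ℝ} (ha : |a| ≤ L) (hb : |b| ≤ L) (hab : a ≠ b) :
    (√(L ^ 2 - a ^ 2) + √(L ^ 2 - b ^ 2)) / 2 < √(L ^ 2 - ((a + b) / 2) ^ 2) := by
  have hLa : 0 ≤ L ^ 2 - a ^ 2 := by rw [sub_nonneg, ← sq_abs a]; gcongr
  have hLb : 0 ≤ L ^ 2 - b ^ 2 := by rw [sub_nonneg, ← sq_abs b]; gcongr
  have hsq : 0 < (a - b) ^ 2 := by positivity [sub_ne_zero.2 hab]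
  rw [Real.lt_sqrt (by positivity)]
  calc ((√(L ^ 2 - a ^ 2) + √(L ^ 2 - b ^ 2)) / 2) ^ 2
      ≤ (√(L ^ 2 - a ^ 2) ^ 2 + √(L ^ 2 - b ^ 2) ^ 2) / 2 := by
        nlinarith [sq_nonneg (√(L ^ 2 - a ^ 2) - √(L ^ 2 - b ^ 2))]
    _ = L ^ 2 - (a ^ 2 + b ^ 2) / 2 := by rw [Real.sq_sqrt hLa, Real.sq_sqrt hLb]; ring
    _ < L ^ 2 - ((a + b) / 2) ^ 2 := by nlinarith

theorem sqrt_sq_sub_sq_avg_le {L a b : ℝ} (ha : |a| ≤ L) (hb : |b| ≤ L) :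
    (√(L ^ 2 - a ^ 2) + √(L ^ 2 - b ^ 2)) / 2 ≤ √(L ^ 2 - ((a + b) / 2) ^ 2) := by
  rcases eq_or_ne a b with rfl | hab
  · ring_nf; rfl
  · exact (sqrt_sq_sub_sq_avg_lt ha hb hab).le

theorem span_avg_lt {ℓ y z : ι → ℝ} (hy : ∀ i, |y i| ≤ ℓ i) (hz : ∀ i, |z i| ≤ ℓ i)
    (hyz : y ≠ z) : (span ℓ y + span ℓ z) / 2 < span ℓ (fun i => (y i + z i) / 2) := by
  obtain ⟨k, hk⟩ := Function.ne_iff.1 hyz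
  rw [span, span, ← sum_add_distrib, sum_div]
  exact sum_lt_sum (fun i _ => sqrt_sq_sub_sq_avg_le (hy i) (hz i))
    ⟨k, mem_univ k, sqrt_sq_sub_sq_avg_lt (hy k) (hz k) hk⟩

theorem exists_abs_lt_of_span_pos {ℓ w : ι → ℝ} (hw : ∀ i, |w i| ≤ ℓ i) (h : 0 < span ℓ w) :
    ∃ k, |w k| < ℓ k := by
  by_contra! hvert
  exact h.ne' (sum_eq_zero fun i _ => sqrt_sq_sub_sq_of_abs_eq ((hw i).antisymm (hvert i)))

section LinearOrder

variable [LinearOrder ι]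

theorem strictAnti_half_add_sum_gt {m : ι → ℝ} (hm : ∀ i, 0 < m i) :
    StrictAnti fun i => m i / 2 + ∑ j ∈ univ.filter (fun j => i < j), m j := by
  intro a b hab
  have hsub : univ.filter (fun t => b < t) ⊆ univ.filter (fun t => a < t) := by
    intro t; simp only [mem_filter, mem_univ, true_and]; exact hab.trans
  have hb : b ∈ univ.filter (fun t => a < t) \ univ.filter (fun t => b < t) := by simp [hab]
  have hmb := single_le_sum (fun t _ => (hm t).le) hb
  have := sum_sdiff (f := m) hsub
  dsimp only
  linarith [hm a, hm b]

/-- Without such a pair, every link but one hangs vertically, so the span is below `d`. -/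
theorem exists_lowerable_lt_raisable [Nonempty ι] {ℓ w : ι → ℝ} {d : ℝ}
    (hℓd : ∀ i, ℓ i < d) (hw : ∀ i, |w i| ≤ ℓ i) (hd : d ≤ span ℓ w) :
    ∃ i j, i < j ∧ -ℓ i < w i ∧ w j < ℓ j := by
  obtain ⟨k₀⟩ := ‹Nonempty ι›
  obtain ⟨k, hk⟩ := exists_abs_lt_of_span_pos hw
    (lt_of_le_of_lt (abs_nonneg _) ((hw k₀).trans_lt ((hℓd k₀).trans_le hd)))
  by_contra! hpair
  have hvert : ∀ t, t ≠ k → |w t| = ℓ t := by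
    intro t htk
    refine (hw t).antisymm ?_
    rcases htk.lt_or_gt with htk | hkt
    · have : w t ≤ -ℓ t := by
        by_contra! ht
        exact (abs_lt.1 hk).2.not_ge (hpair t k htk ht)
      exact (le_neg.1 this).trans (neg_le_abs _)
    · exact (hpair k t hkt (abs_lt.1 hk).1).trans (le_abs_self _)
  have hspan : span ℓ w = √(ℓ k ^ 2 - w k ^ 2) :=
    sum_eq_single k (fun t _ htk => sqrt_sq_sub_sq_of_abs_eq (hvert t htk)) (by simp)
  linarith [hℓd k, sqrt_sq_sub_sq_le (a := w k) ((abs_nonneg _).trans hk.le)]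

theorem eventually_feasible_shift {ℓ w : ι → ℝ} {d : ℝ} {i j : ι} (hij : i ≠ j)
    (hi : -ℓ i < w i) (hj : w j < ℓ j) (hsum : ∑ t, w t = 0) (hw : ∀ t, |w t| ≤ ℓ t)
    (hd : d < span ℓ w) :
    ∀ᶠ ε in 𝓝[>] (0 : ℝ), Feasible ℓ d (w + ε • (Pi.single j 1 - Pi.single i 1)) := by
  set v : ι → ℝ := Pi.single j 1 - Pi.single i 1
  have hvi : v i = -1 := by simp [v, hij]
  have hvj : v j = 1 := by simp [v, Ne.symm hij]
  have hv : ∀ t, t ≠ i → t ≠ j → v t = 0 := fun t hti htj => by simp [v, hti, htj]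
  have hcont : Continuous fun ε : ℝ => span ℓ (w + ε • v) := by unfold span; fun_prop
  have hspan : ∀ᶠ ε in 𝓝 (0 : ℝ), d < span ℓ (w + ε • v) :=
    hcont.continuousAt.eventually_const_lt (by simpa using hd)
  have hεi : ∀ᶠ ε in 𝓝 (0 : ℝ), ε < w i + ℓ i := eventually_lt_nhds (by linarith)
  have hεj : ∀ᶠ ε in 𝓝 (0 : ℝ), ε < ℓ j - w j := eventually_lt_nhds (by linarith)
  filter_upwards [(hspan.and (hεi.and hεj)).filter_mono nhdsWithin_le_nhds, self_mem_nhdsWithin]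
    with ε ⟨hεd, hεi, hεj⟩ (hε : 0 < ε)
  refine ⟨?_, fun t => ?_, hεd.le⟩
  · simp [v, sum_add_distrib, ← mul_sum, hsum]
  · have hwt := abs_le.1 (hw t)
    simp only [Pi.add_apply, Pi.smul_apply, smul_eq_mul]
    rcases eq_or_ne t i with rfl | hti
    · rw [hvi, abs_le]; constructor <;> linarith
    rcases eq_or_ne t j with rfl | htj
    · rw [hvj, abs_le]; constructor <;> linarith
    · rw [hv t hti htj, mul_zero, add_zero]
      exact hw t

theorem exists_feasible_cost_lt [Nonempty ι] {c ℓ w : ι → ℝ} {d : ℝ} (hc : StrictAnti c)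
    (hℓd : ∀ i, ℓ i < d) (hsum : ∑ t, w t = 0) (hw : ∀ t, |w t| ≤ ℓ t) (hd : d < span ℓ w) :
    ∃ w', Feasible ℓ d w' ∧ ∑ t, c t * w' t < ∑ t, c t * w t := by
  obtain ⟨i, j, hij, hi, hj⟩ := exists_lowerable_lt_raisable hℓd hw hd.le
  obtain ⟨ε, hfeas, hε⟩ :=
    ((eventually_feasible_shift hij.ne hi hj hsum hw hd).and self_mem_nhdsWithin).exists
  refine ⟨_, hfeas, ?_⟩
  have hcost : ∑ t, c t * (w + ε • (Pi.single j 1 - Pi.single i 1) : ι → ℝ) t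
      = ∑ t, c t * w t + (c j - c i) * ε := by
    simp [mul_add, mul_sub, sub_mul, sum_add_distrib, sum_sub_distrib, Pi.single_apply]
  rw [hcost]
  linarith [mul_neg_of_neg_of_pos (sub_neg.2 (hc hij)) hε]

end LinearOrder

end HangingChain

open HangingChain

theorem relaxed_at_most_one_optimum_general (n : ℕ) (m ℓ : Fin n → ℝ)
    (hm : ∀ i, 0 < m i) (d : ℝ)
    (hd₁ : ∀ i, ℓ i < d) (c : Fin n → ℝ)
    (hc : ∀ i, c i = m i / 2 + ∑ j ∈ Finset.univ.filter (fun j => i < j), m j)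
    (y z : Fin n → ℝ)
    (hy₁ : (∑ i, y i) = 0) (hy₂ : ∀ i, |y i| ≤ ℓ i)
    (hy₃ : d ≤ ∑ i, Real.sqrt (ℓ i ^ 2 - y i ^ 2))
    (hz₁ : (∑ i, z i) = 0) (hz₂ : ∀ i, |z i| ≤ ℓ i)
    (hz₃ : d ≤ ∑ i, Real.sqrt (ℓ i ^ 2 - z i ^ 2))
    (hyopt : ∀ w : Fin n → ℝ, (∑ i, w i) = 0 → (∀ i, |w i| ≤ ℓ i) →
      d ≤ (∑ i, Real.sqrt (ℓ i ^ 2 - w i ^ 2)) →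
      (∑ i, c i * y i) ≤ ∑ i, c i * w i)
    (hzopt : ∀ w : Fin n → ℝ, (∑ i, w i) = 0 → (∀ i, |w i| ≤ ℓ i) →
      d ≤ (∑ i, Real.sqrt (ℓ i ^ 2 - w i ^ 2)) →
      (∑ i, c i * z i) ≤ ∑ i, c i * w i) :
    y = z := by
  by_contra hyz
  obtain ⟨k, -⟩ := Function.ne_iff.1 hyz
  have : Nonempty (Fin n) := ⟨k⟩
  set w : Fin n → ℝ := fun i => (y i + z i) / 2
  have hcost : ∑ i, c i * w i = ∑ i, c i * y i := by
    have := (hyopt z hz₁ hz₂ hz₃).antisymm (hzopt y hy₁ hy₂ hy₃)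
    simp only [w, mul_div_assoc', mul_add, ← sum_div, sum_add_distrib]
    linarith
  have hsum : ∑ i, w i = 0 := by
    simp only [w, ← sum_div, sum_add_distrib, hy₁, hz₁, add_zero, zero_div]
  have hw : ∀ i, |w i| ≤ ℓ i := fun i => by
    have := abs_le.1 (hy₂ i); have := abs_le.1 (hz₂ i)
    exact abs_le.2 ⟨by simp only [w]; linarith, by simp only [w]; linarith⟩
  have hd : d < span ℓ w := by
    linarith [span_avg_lt hy₂ hz₂ hyz, show d ≤ span ℓ y from hy₃, show d ≤ span ℓ z from hz₃]
  have hc_anti : StrictAnti c := by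
    rw [funext hc]
    exact strictAnti_half_add_sum_gt hm
  obtain ⟨w', ⟨hw'₁, hw'₂, hw'₃⟩, hlt⟩ := exists_feasible_cost_lt hc_anti hd₁ hsum hw hd
  exact (hyopt w' hw'₁ hw'₂ hw'₃).not_gt (hcost ▸ hlt)

theorem relaxed_at_most_one_optimum (n : ℕ) (hn : 2 ≤ n) (m ℓ : Fin n → ℝ)
    (hm : ∀ i, 0 < m i) (hℓ : ∀ i, 0 < ℓ i) (d : ℝ)
    (hd₁ : ∀ i, ℓ i < d) (hd₂ : d < ∑ i, ℓ i) (c : Fin n → ℝ)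
    (hc : ∀ i, c i = m i / 2 + ∑ j ∈ Finset.univ.filter (fun j => i < j), m j)
    (y z : Fin n → ℝ)
    (hy₁ : (∑ i, y i) = 0) (hy₂ : ∀ i, |y i| ≤ ℓ i)
    (hy₃ : d ≤ ∑ i, Real.sqrt (ℓ i ^ 2 - y i ^ 2))
    (hz₁ : (∑ i, z i) = 0) (hz₂ : ∀ i, |z i| ≤ ℓ i)
    (hz₃ : d ≤ ∑ i, Real.sqrt (ℓ i ^ 2 - z i ^ 2))
    (hyopt : ∀ w : Fin n → ℝ, (∑ i, w i) = 0 → (∀ i, |w i| ≤ ℓ i) →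
      d ≤ (∑ i, Real.sqrt (ℓ i ^ 2 - w i ^ 2)) →
      (∑ i, c i * y i) ≤ ∑ i, c i * w i)
    (hzopt : ∀ w : Fin n → ℝ, (∑ i, w i) = 0 → (∀ i, |w i| ≤ ℓ i) →
      d ≤ (∑ i, Real.sqrt (ℓ i ^ 2 - w i ^ 2)) →
      (∑ i, c i * z i) ≤ ∑ i, c i * w i) :
    y = z :=
  relaxed_at_most_one_optimum_general n m ℓ hm d hd₁ c hc y z hy₁ hy₂ hy₃ hz₁ hz₂ hz₃ hyopt hzopt
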